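/- Optimal strategy of the AFS model, Version 1 (constant resilience, Theorem 4.1 of Alfonsi–Fruth–Schied as restated in the paper): let ρ > 0 be constant and suppose the function h₁(x) := F⁻¹(x) − e^{−ρτ}·F⁻¹(e^{−ρτ}x) is one-to-one. Then the cost functional C⁽¹⁾ (with ρ̄ ≡ ρ, i.e. ā(x) = e^{−ρτ} for all x) has a unique minimizer ξ = (ξ₀,…,ξ_N) on Ξ. The initial order ξ₀ is the unique solution of F⁻¹(X₀ − Nξ₀(1 − e^{−ρτ})) = h₁(ξ₀)/(1 − e^{−ρτ}); the intermediate orders satisfy ξ₁ = … = ξ_{N−1} = ξ₀(1 − e^{−ρτ}); the final order is ξ_N = X₀ − ∑_{n=0}^{N−1} ξₙ; and ξₙ > 0 for all n. -/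

import Mathlib

/-!
Write `uₙ = Eₙ + xₙ` for the deviation just after the `n`-th trade, so that `Eₙ₊₁ = a uₙ`. In these
variables the budget is the linear constraint `u_N + (1 - a) ∑_{n<N} uₙ = X₀` and the cost
telescopes to `G(u_N) + ∑_{n<N} (G(uₙ) - G(a uₙ))`. Both terms are strictly convex: `G' = F⁻¹`
is strictly increasing, and the derivative `h₁` of `u ↦ G(u) - G(a u)` is continuous, injective
and positive on `(0, ∞)`, hence strictly increasing. For such a separable problem the Lagrange
condition `(1 - a) F⁻¹(u_N) = h₁(uₙ)` is sufficient, and the cost gap to any other admissible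
point is a sum of tangent-line (Bregman) gaps, which vanishes only at that point. Taking all
`uₙ = ξ₀` for `n < N`, the budget forces `u_N = X₀ - N ξ₀ (1 - a)`, and the Lagrange condition
becomes the root equation for `ξ₀`, whose left side minus right side is strictly decreasing and
changes sign on `[0, X₀ / (N (1 - a))]`.
-/

open Real Filter Finset

/-- `Fi f x = F(x) = ∫₀ˣ f(y) dy`. -/
noncomputable def Fi (f : ℝ → ℝ) (x : ℝ) : ℝ := ∫ y in (0:ℝ)..x, f y

/-- `Ft f x = F̃(x) = ∫₀ˣ y f(y) dy`. -/
noncomputable def Ft (f : ℝ → ℝ) (x : ℝ) : ℝ := ∫ y in (0:ℝ)..x, y * f y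

/-- `Gf f Finv = G = F̃ ∘ F⁻¹`. -/
noncomputable def Gf (f Finv : ℝ → ℝ) (x : ℝ) : ℝ := Ft f (Finv x)

/-- Version 1 dynamics with constant resilience factor `a = e^{−ρτ}`:
`E₀ = 0`, `E_{n+1} = a·(Eₙ + xₙ)`. -/
noncomputable def EvC (a : ℝ) (x : ℕ → ℝ) : ℕ → ℝ
  | 0 => 0
  | n + 1 => a * (EvC a x n + x n)

/-- Version 1 cost functional with constant resilience. -/
noncomputable def C1C (f Finv : ℝ → ℝ) (a : ℝ) (N : ℕ) (x : ℕ → ℝ) : ℝ :=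
  ∑ n ∈ Finset.range (N + 1), (Gf f Finv (EvC a x n + x n) - Gf f Finv (EvC a x n))

theorem add_mul_sub_lt_of_hasDerivAt {Φ φ : ℝ → ℝ} (hΦ : ∀ x, HasDerivAt Φ (φ x) x)
    (hφ : StrictMono φ) {p u : ℝ} (hne : u ≠ p) : Φ p + φ p * (u - p) < Φ u := by
  have hconv : StrictConvexOn ℝ Set.univ Φ := by
    refine StrictMono.strictConvexOn_univ_of_deriv
      (continuous_iff_continuousAt.2 fun x => (hΦ x).continuousAt) ?_
    rwa [show deriv Φ = φ from funext fun x => (hΦ x).deriv]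
  rcases hne.lt_or_gt with hup | hpu
  · have := hconv.slope_lt_of_hasDerivAt trivial trivial hup (hΦ p)
    rw [slope_def_field, div_lt_iff₀ (sub_pos.2 hup)] at this
    linarith
  · have := hconv.lt_slope_of_hasDerivAt trivial trivial hpu (hΦ p)
    rw [slope_def_field, lt_div_iff₀ (sub_pos.2 hpu)] at this
    linarith

theorem add_mul_sub_le_of_hasDerivAt {Φ φ : ℝ → ℝ} (hΦ : ∀ x, HasDerivAt Φ (φ x) x)
    (hφ : StrictMono φ) (p u : ℝ) : Φ p + φ p * (u - p) ≤ Φ u := by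
  rcases eq_or_ne u p with rfl | hne
  · simp
  · exact (add_mul_sub_lt_of_hasDerivAt hΦ hφ hne).le

section Lagrange

variable {ι : Type*} (s : Finset ι) {Φ₀ φ₀ Φ φ : ℝ → ℝ} {c A p w : ℝ} {u : ι → ℝ}

theorem add_sum_sub_eq_of_lagrange (hAp : c * φ₀ A = φ p)
    (hbudget : w + c * ∑ i ∈ s, u i = A + c * (#s * p)) :
    Φ₀ w + ∑ i ∈ s, Φ (u i) - (Φ₀ A + #s * Φ p) =
      (Φ₀ w - (Φ₀ A + φ₀ A * (w - A))) + ∑ i ∈ s, (Φ (u i) - (Φ p + φ p * (u i - p))) := by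
  simp only [sum_sub_distrib, sum_add_distrib, ← mul_sum, sum_const, nsmul_eq_mul]
  linear_combination φ₀ A * hbudget - (∑ i ∈ s, u i - #s * p) * hAp

theorem le_add_sum_of_lagrange (hΦ₀ : ∀ x, HasDerivAt Φ₀ (φ₀ x) x) (hφ₀ : StrictMono φ₀)
    (hΦ : ∀ x, HasDerivAt Φ (φ x) x) (hφ : StrictMono φ) (hAp : c * φ₀ A = φ p)
    (hbudget : w + c * ∑ i ∈ s, u i = A + c * (#s * p)) :
    Φ₀ A + #s * Φ p ≤ Φ₀ w + ∑ i ∈ s, Φ (u i) := by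
  have hterm := add_mul_sub_le_of_hasDerivAt hΦ₀ hφ₀ A w
  have hrun := sum_nonneg fun i (_ : i ∈ s) =>
    sub_nonneg.2 (add_mul_sub_le_of_hasDerivAt hΦ hφ p (u i))
  linarith [add_sum_sub_eq_of_lagrange s (Φ₀ := Φ₀) (Φ := Φ) hAp hbudget]

theorem eq_of_add_sum_le_of_lagrange (hΦ₀ : ∀ x, HasDerivAt Φ₀ (φ₀ x) x)
    (hφ₀ : StrictMono φ₀) (hΦ : ∀ x, HasDerivAt Φ (φ x) x) (hφ : StrictMono φ)
    (hAp : c * φ₀ A = φ p) (hbudget : w + c * ∑ i ∈ s, u i = A + c * (#s * p))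
    (hle : Φ₀ w + ∑ i ∈ s, Φ (u i) ≤ Φ₀ A + #s * Φ p) :
    w = A ∧ ∀ i ∈ s, u i = p := by
  have hid := add_sum_sub_eq_of_lagrange s (Φ₀ := Φ₀) (Φ := Φ) hAp hbudget
  have hterm := add_mul_sub_le_of_hasDerivAt hΦ₀ hφ₀ A w
  have hrun : ∀ i ∈ s, 0 ≤ Φ (u i) - (Φ p + φ p * (u i - p)) := fun i _ =>
    sub_nonneg.2 (add_mul_sub_le_of_hasDerivAt hΦ hφ p (u i))
  have hsum := sum_nonneg hrun
  refine ⟨?_, fun i hi => ?_⟩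
  · by_contra hw
    linarith [add_mul_sub_lt_of_hasDerivAt hΦ₀ hφ₀ hw]
  · by_contra hu
    have hzero := (sum_eq_zero_iff_of_nonneg hrun).1 (by linarith) i hi
    linarith [add_mul_sub_lt_of_hasDerivAt hΦ hφ hu]

end Lagrange

noncomputable def EvCPlus (a : ℝ) (x : ℕ → ℝ) (n : ℕ) : ℝ := EvC a x n + x n

def ofEvCPlus (a : ℝ) (u : ℕ → ℝ) : ℕ → ℝ
  | 0 => u 0
  | n + 1 => u (n + 1) - a * u n

section Dynamics

variable (a : ℝ)

theorem EvC_succ (x : ℕ → ℝ) (n : ℕ) : EvC a x (n + 1) = a * EvCPlus a x n := rfl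

theorem EvCPlus_ofEvCPlus (u : ℕ → ℝ) : EvCPlus a (ofEvCPlus a u) = u := by
  funext n
  induction n with
  | zero => simp [EvCPlus, EvC, ofEvCPlus]
  | succ n ih => rw [EvCPlus, EvC_succ, ih, ofEvCPlus]; ring

theorem ofEvCPlus_EvCPlus (x : ℕ → ℝ) : ofEvCPlus a (EvCPlus a x) = x := by
  funext n
  cases n with
  | zero => simp [ofEvCPlus, EvCPlus, EvC]
  | succ n => rw [ofEvCPlus, EvCPlus, EvC_succ]; ring

theorem eq_of_EvCPlus_eq {x y : ℕ → ℝ} {N : ℕ} (h : ∀ n ≤ N, EvCPlus a x n = EvCPlus a y n) :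
    ∀ n ≤ N, x n = y n := by
  intro n hn
  rw [← ofEvCPlus_EvCPlus a x, ← ofEvCPlus_EvCPlus a y]
  cases n with
  | zero => exact h 0 hn
  | succ n => rw [ofEvCPlus, ofEvCPlus, h n (by omega), h (n + 1) hn]

theorem sum_range_succ_sub_EvC (g : ℝ → ℝ) (hg : g 0 = 0) (x : ℕ → ℝ) (N : ℕ) :
    ∑ n ∈ range (N + 1), (g (EvCPlus a x n) - g (EvC a x n)) =
      g (EvCPlus a x N) + ∑ n ∈ range N, (g (EvCPlus a x n) - g (a * EvCPlus a x n)) := by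
  rw [sum_sub_distrib, sum_range_succ, sum_range_succ' (fun n => g (EvC a x n)),
    sum_sub_distrib]
  simp only [EvC_succ]
  rw [show EvC a x 0 = 0 from rfl, hg]
  ring

theorem sum_range_succ_eq_EvCPlus (x : ℕ → ℝ) (N : ℕ) :
    ∑ n ∈ range (N + 1), x n = EvCPlus a x N + (1 - a) * ∑ n ∈ range N, EvCPlus a x n := by
  have := sum_range_succ_sub_EvC a id rfl x N
  simp only [id, EvCPlus, add_sub_cancel_left] at this
  rw [this, mul_sum]
  simp only [EvCPlus]
  congr 1
  exact sum_congr rfl fun n _ => by ring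

end Dynamics

section Primitives

variable {f Finv : ℝ → ℝ}

theorem hasDerivAt_Fi (hf : Continuous f) (x : ℝ) : HasDerivAt (Fi f) (f x) x :=
  (hf.integral_hasStrictDerivAt 0 x).hasDerivAt

theorem hasDerivAt_Ft (hf : Continuous f) (x : ℝ) : HasDerivAt (Ft f) (x * f x) x :=
  ((continuous_id.mul hf).integral_hasStrictDerivAt 0 x).hasDerivAt

theorem strictMono_Fi (hf : Continuous f) (hfpos : ∀ x, 0 < f x) : StrictMono (Fi f) :=
  strictMono_of_hasDerivAt_pos (hasDerivAt_Fi hf) hfpos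

theorem StrictMono.of_rightInverse {F g : ℝ → ℝ} (hF : StrictMono F) (hFg : ∀ x, F (g x) = x) :
    StrictMono g :=
  fun x y hxy => hF.lt_iff_lt.1 (by rwa [hFg, hFg])

theorem continuous_of_rightInverse {F g : ℝ → ℝ} (hF : StrictMono F) (hFg : ∀ x, F (g x) = x)
    (hgF : ∀ x, g (F x) = x) : Continuous g :=
  (hF.of_rightInverse hFg).monotone.continuous_of_surjective fun y => ⟨F y, hgF y⟩

theorem Finv_zero (hFinv₂ : ∀ x, Finv (Fi f x) = x) : Finv 0 = 0 := by
  simpa [Fi] using hFinv₂ 0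

theorem Gf_zero (hFinv₂ : ∀ x, Finv (Fi f x) = x) : Gf f Finv 0 = 0 := by
  simp [Gf, Ft, Finv_zero hFinv₂]

theorem hasDerivAt_Gf (hf : Continuous f) (hfpos : ∀ x, 0 < f x)
    (hFinv₁ : ∀ x, Fi f (Finv x) = x) (hFinv₂ : ∀ x, Finv (Fi f x) = x) (x : ℝ) :
    HasDerivAt (Gf f Finv) (Finv x) x := by
  have hFinv_deriv : HasDerivAt Finv (f (Finv x))⁻¹ x :=
    (hasDerivAt_Fi hf (Finv x)).of_local_left_inverse
      (continuous_of_rightInverse (strictMono_Fi hf hfpos) hFinv₁ hFinv₂).continuousAt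
      (hfpos _).ne' (Eventually.of_forall hFinv₁)
  exact ((hasDerivAt_Ft hf (Finv x)).comp x hFinv_deriv).congr_deriv
    (by field_simp [(hfpos (Finv x)).ne'])

end Primitives

-- The paper's `h₁`: the derivative of `u ↦ G u - G (a u)` when `G' = g`.
def hOne (g : ℝ → ℝ) (a x : ℝ) : ℝ := g x - a * g (a * x)

section HOne

variable {g : ℝ → ℝ} {a : ℝ}

theorem hasDerivAt_sub_comp_mul {G : ℝ → ℝ} (hG : ∀ x, HasDerivAt G (g x) x) (x : ℝ) :
    HasDerivAt (fun z => G z - G (a * z)) (hOne g a x) x :=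
  ((hG x).sub ((hG (a * x)).comp x ((hasDerivAt_id x).const_mul a))).congr_deriv
    (by simp [hOne, mul_comm])

theorem one_sub_mul_lt_hOne (hg : StrictMono g) (ha1 : a < 1) {z : ℝ} (hz : 0 < z) :
    (1 - a) * g (a * z) < hOne g a z := by
  have := hg (mul_lt_of_lt_one_left hz ha1)
  rw [hOne]
  linarith

theorem hOne_pos (hg : StrictMono g) (hg0 : g 0 = 0) (ha0 : 0 < a) (ha1 : a < 1) {z : ℝ}
    (hz : 0 < z) : 0 < hOne g a z := by
  have : 0 < g (a * z) := hg0 ▸ hg (mul_pos ha0 hz)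
  exact (mul_pos (sub_pos.2 ha1) this).trans (one_sub_mul_lt_hOne hg ha1 hz)

theorem continuous_hOne (hgc : Continuous g) : Continuous (hOne g a) := by
  unfold hOne
  fun_prop

theorem strictMono_hOne (hgc : Continuous g) (hg : StrictMono g) (hg0 : g 0 = 0) (ha0 : 0 < a)
    (ha1 : a < 1) (hinj : Function.Injective (hOne g a)) : StrictMono (hOne g a) := by
  refine ((continuous_hOne hgc).strictMono_of_inj hinj).resolve_right fun hanti => ?_
  have h0 : hOne g a 0 = 0 := by simp [hOne, hg0]
  have := hanti zero_lt_one
  linarith [hOne_pos hg hg0 ha0 ha1 one_pos]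

theorem exists_unique_pos_root (hgc : Continuous g) (hg : StrictMono g) (hg0 : g 0 = 0)
    (ha0 : 0 < a) (ha1 : a < 1) (hh : StrictMono (hOne g a)) {N X₀ : ℝ} (hN : 0 < N)
    (hX₀ : 0 < X₀) :
    ∃ z, 0 < z ∧ g (X₀ - N * (z * (1 - a))) = hOne g a z / (1 - a) ∧
      ∀ z', g (X₀ - N * (z' * (1 - a))) = hOne g a z' / (1 - a) → z' = z := by
  have h1a : 0 < 1 - a := sub_pos.2 ha1
  set ψ : ℝ → ℝ := fun z => g (X₀ - N * (z * (1 - a))) - hOne g a z / (1 - a)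
  have hψ : StrictAnti ψ := fun z z' hzz' => by
    have hg_lt : g (X₀ - N * (z' * (1 - a))) < g (X₀ - N * (z * (1 - a))) :=
      hg (by nlinarith [mul_pos hN h1a])
    have hh_lt := div_lt_div_of_pos_right (hh hzz') h1a
    simp only [ψ]
    linarith
  have hψc : Continuous ψ := by
    have := continuous_hOne (a := a) hgc
    fun_prop
  have hψ0 : 0 < ψ 0 := by simpa [ψ, hOne, hg0] using hg0 ▸ hg hX₀
  set M := X₀ / (N * (1 - a))
  have hM : 0 < M := by positivity
  have hψM : ψ M < 0 := by
    have : X₀ - N * (M * (1 - a)) = 0 := by simp only [M]; field_simp; ring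
    simp only [ψ, this, hg0, zero_sub, neg_lt_zero]
    exact div_pos (hOne_pos hg hg0 ha0 ha1 hM) h1a
  obtain ⟨z, hzM, hz⟩ := intermediate_value_Icc' hM.le hψc.continuousOn ⟨hψM.le, hψ0.le⟩
  refine ⟨z, hzM.1.lt_of_ne ?_, sub_eq_zero.1 hz, fun z' hz' => hψ.injective ?_⟩
  · rintro rfl
    exact hψ0.ne' hz
  · simp only [ψ, hz', sub_self, hz]

theorem mul_lt_of_one_sub_mul_eq_hOne (hg : StrictMono g) (ha1 : a < 1) {z A : ℝ} (hz : 0 < z)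
    (hA : (1 - a) * g A = hOne g a z) : a * z < A :=
  hg.lt_iff_lt.1 <| lt_of_mul_lt_mul_left (hA ▸ one_sub_mul_lt_hOne hg ha1 hz) (sub_pos.2 ha1).le

end HOne

def plateau (N : ℕ) (b A : ℝ) (n : ℕ) : ℝ := if n < N then b else A

section Plateau

variable {a b A : ℝ} {N : ℕ}

theorem plateau_of_lt {n : ℕ} (hn : n < N) : plateau N b A n = b := if_pos hn

theorem plateau_self : plateau N b A N = A := if_neg (lt_irrefl N)

theorem ofEvCPlus_plateau_zero (hN : 0 < N) : ofEvCPlus a (plateau N b A) 0 = b := by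
  simp [ofEvCPlus, plateau, hN]

theorem ofEvCPlus_plateau_of_lt {n : ℕ} (h1 : 1 ≤ n) (hn : n < N) :
    ofEvCPlus a (plateau N b A) n = b * (1 - a) := by
  obtain ⟨m, rfl⟩ := Nat.exists_eq_add_of_le' h1
  simp only [ofEvCPlus, plateau, hn, (by omega : m < N), if_true]
  ring

theorem ofEvCPlus_plateau_self (hN : 0 < N) : ofEvCPlus a (plateau N b A) N = A - a * b := by
  obtain ⟨m, rfl⟩ := Nat.exists_eq_add_of_lt hN
  simp [ofEvCPlus, plateau]

theorem ofEvCPlus_plateau_pos (hN : 0 < N) (hb : 0 < b) (ha1 : a < 1) (hA : a * b < A) {n : ℕ}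
    (hn : n ≤ N) : 0 < ofEvCPlus a (plateau N b A) n := by
  rcases Nat.eq_zero_or_pos n with rfl | h1
  · rwa [ofEvCPlus_plateau_zero hN]
  rcases hn.lt_or_eq with hn | rfl
  · rw [ofEvCPlus_plateau_of_lt h1 hn]
    exact mul_pos hb (sub_pos.2 ha1)
  · rw [ofEvCPlus_plateau_self hN]
    exact sub_pos.2 hA

end Plateau

section Optimality

variable {f Finv : ℝ → ℝ} {a b A : ℝ} {N : ℕ}

theorem C1C_eq (hG0 : Gf f Finv 0 = 0) (x : ℕ → ℝ) :
    C1C f Finv a N x = Gf f Finv (EvCPlus a x N) +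
      ∑ n ∈ range N, (Gf f Finv (EvCPlus a x n) - Gf f Finv (a * EvCPlus a x n)) :=
  sum_range_succ_sub_EvC a _ hG0 x N

theorem C1C_ofEvCPlus_plateau (hG0 : Gf f Finv 0 = 0) :
    C1C f Finv a N (ofEvCPlus a (plateau N b A)) =
      Gf f Finv A + N * (Gf f Finv b - Gf f Finv (a * b)) := by
  rw [C1C_eq hG0, EvCPlus_ofEvCPlus, plateau_self,
    sum_congr rfl fun n hn => by rw [plateau_of_lt (mem_range.1 hn)]]
  simp [mul_sub]

theorem C1C_ofEvCPlus_plateau_le (hG : ∀ x, HasDerivAt (Gf f Finv) (Finv x) x)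
    (hG0 : Gf f Finv 0 = 0) (hg : StrictMono Finv) (hh : StrictMono (hOne Finv a))
    (hKKT : (1 - a) * Finv A = hOne Finv a b) {y : ℕ → ℝ}
    (hy : ∑ n ∈ range (N + 1), y n = A + (1 - a) * (N * b)) :
    C1C f Finv a N (ofEvCPlus a (plateau N b A)) ≤ C1C f Finv a N y := by
  have := le_add_sum_of_lagrange (range N) hG hg (hasDerivAt_sub_comp_mul hG) hh hKKT
    (by rw [← sum_range_succ_eq_EvCPlus, hy, card_range])
  rwa [card_range, ← C1C_ofEvCPlus_plateau hG0, ← C1C_eq hG0] at this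

theorem eq_ofEvCPlus_plateau_of_C1C_le (hG : ∀ x, HasDerivAt (Gf f Finv) (Finv x) x)
    (hG0 : Gf f Finv 0 = 0) (hg : StrictMono Finv) (hh : StrictMono (hOne Finv a))
    (hKKT : (1 - a) * Finv A = hOne Finv a b) {y : ℕ → ℝ}
    (hy : ∑ n ∈ range (N + 1), y n = A + (1 - a) * (N * b))
    (hle : C1C f Finv a N y ≤ C1C f Finv a N (ofEvCPlus a (plateau N b A))) :
    ∀ n ≤ N, y n = ofEvCPlus a (plateau N b A) n := by
  rw [C1C_ofEvCPlus_plateau hG0, C1C_eq hG0] at hle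
  obtain ⟨hlast, hrun⟩ := eq_of_add_sum_le_of_lagrange (range N) hG hg
    (hasDerivAt_sub_comp_mul hG) hh hKKT (by rw [← sum_range_succ_eq_EvCPlus, hy, card_range])
    (by rwa [card_range])
  refine eq_of_EvCPlus_eq a fun n hn => ?_
  rw [EvCPlus_ofEvCPlus, plateau]
  split_ifs with h
  · exact hrun n (mem_range.2 h)
  · rwa [show n = N by omega]

end Optimality

theorem afs_version1_optimal_strategy_general
    (f Finv : ℝ → ℝ) (hf : Continuous f) (hfpos : ∀ x, 0 < f x)
    (hFinv₁ : ∀ x, Fi f (Finv x) = x) (hFinv₂ : ∀ x, Finv (Fi f x) = x)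
    (τ : ℝ) (hτ : 0 < τ) (ρc : ℝ) (hρc : 0 < ρc)
    (a : ℝ) (ha : a = Real.exp (-(ρc * τ)))
    (N : ℕ) (hN : 1 ≤ N) (X₀ : ℝ) (hX₀ : 0 < X₀)
    (hh1 : Function.Injective (fun x : ℝ => Finv x - a * Finv (a * x))) :
    ∃ ξ : ℕ → ℝ,
      (∑ n ∈ Finset.range (N + 1), ξ n = X₀) ∧
      (∀ y : ℕ → ℝ, (∑ n ∈ Finset.range (N + 1), y n = X₀) →
        C1C f Finv a N ξ ≤ C1C f Finv a N y) ∧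
      (∀ y : ℕ → ℝ, (∑ n ∈ Finset.range (N + 1), y n = X₀) →
        (∀ z : ℕ → ℝ, (∑ n ∈ Finset.range (N + 1), z n = X₀) →
          C1C f Finv a N y ≤ C1C f Finv a N z) →
        ∀ n ≤ N, y n = ξ n) ∧
      (Finv (X₀ - (N : ℝ) * (ξ 0 * (1 - a))) = (Finv (ξ 0) - a * Finv (a * ξ 0)) / (1 - a)) ∧
      (∀ z : ℝ, Finv (X₀ - (N : ℝ) * (z * (1 - a))) = (Finv z - a * Finv (a * z)) / (1 - a) →
        z = ξ 0) ∧
      (∀ n : ℕ, 1 ≤ n → n < N → ξ n = ξ 0 * (1 - a)) ∧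
      (ξ N = X₀ - ∑ n ∈ Finset.range N, ξ n) ∧
      (∀ n ≤ N, 0 < ξ n) := by
  have ha0 : 0 < a := ha ▸ exp_pos _
  have ha1 : a < 1 := ha ▸ exp_lt_one_iff.2 (neg_neg_of_pos (mul_pos hρc hτ))
  have hg := (strictMono_Fi hf hfpos).of_rightInverse hFinv₁
  have hgc := continuous_of_rightInverse (strictMono_Fi hf hfpos) hFinv₁ hFinv₂
  have hG := hasDerivAt_Gf hf hfpos hFinv₁ hFinv₂
  have hh := strictMono_hOne hgc hg (Finv_zero hFinv₂) ha0 ha1 hh1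
  obtain ⟨ξ₀, hξ₀, hroot, hroot_unique⟩ :=
    exists_unique_pos_root hgc hg (Finv_zero hFinv₂) ha0 ha1 hh (N := N) (Nat.cast_pos.2 hN) hX₀
  set A := X₀ - N * (ξ₀ * (1 - a))
  have hKKT : (1 - a) * Finv A = hOne Finv a ξ₀ := by
    rw [hroot, mul_div_cancel₀ _ (sub_pos.2 ha1).ne']
  have hbudget : ∀ y : ℕ → ℝ, ∑ n ∈ range (N + 1), y n = X₀ ↔
      ∑ n ∈ range (N + 1), y n = A + (1 - a) * (N * ξ₀) := fun y => by
    rw [show A + (1 - a) * (N * ξ₀) = X₀ by ring]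
  set ξ := ofEvCPlus a (plateau N ξ₀ A)
  have hξ : ∑ n ∈ range (N + 1), ξ n = X₀ := by
    rw [hbudget, sum_range_succ_eq_EvCPlus, EvCPlus_ofEvCPlus, plateau_self,
      sum_congr rfl fun n hn => plateau_of_lt (mem_range.1 hn)]
    simp
  have hξ0 : ξ 0 = ξ₀ := ofEvCPlus_plateau_zero hN
  refine ⟨ξ, hξ, fun y hy => C1C_ofEvCPlus_plateau_le hG (Gf_zero hFinv₂) hg hh hKKT
      ((hbudget y).1 hy),
    fun y hy hmin => eq_ofEvCPlus_plateau_of_C1C_le hG (Gf_zero hFinv₂) hg hh hKKT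
      ((hbudget y).1 hy) (hmin ξ hξ),
    hξ0 ▸ hroot, hξ0 ▸ hroot_unique, fun n h1 hn => hξ0 ▸ ofEvCPlus_plateau_of_lt h1 hn,
    by rw [← hξ, sum_range_succ]; ring,
    fun n hn => ofEvCPlus_plateau_pos hN hξ₀ ha1 (mul_lt_of_one_sub_mul_eq_hOne hg ha1 hξ₀ hKKT) hn⟩

/-- Optimal strategy of the AFS model, Version 1 (constant resilience speed `ρ`). -/
theorem afs_version1_optimal_strategy
    (f Finv : ℝ → ℝ) (hf : Continuous f) (hfpos : ∀ x, 0 < f x)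
    (htop : Tendsto (Fi f) atTop atTop) (hbot : Tendsto (Fi f) atBot atBot)
    (hFinv₁ : ∀ x, Fi f (Finv x) = x) (hFinv₂ : ∀ x, Finv (Fi f x) = x)
    (τ : ℝ) (hτ : 0 < τ) (ρc : ℝ) (hρc : 0 < ρc)
    (a : ℝ) (ha : a = Real.exp (-(ρc * τ)))
    (N : ℕ) (hN : 1 ≤ N) (X₀ : ℝ) (hX₀ : 0 < X₀)
    (hh1 : Function.Injective (fun x : ℝ => Finv x - a * Finv (a * x))) :
    ∃ ξ : ℕ → ℝ,
      (∑ n ∈ Finset.range (N + 1), ξ n = X₀) ∧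
      (∀ y : ℕ → ℝ, (∑ n ∈ Finset.range (N + 1), y n = X₀) →
        C1C f Finv a N ξ ≤ C1C f Finv a N y) ∧
      (∀ y : ℕ → ℝ, (∑ n ∈ Finset.range (N + 1), y n = X₀) →
        (∀ z : ℕ → ℝ, (∑ n ∈ Finset.range (N + 1), z n = X₀) →
          C1C f Finv a N y ≤ C1C f Finv a N z) →
        ∀ n ≤ N, y n = ξ n) ∧
      (Finv (X₀ - (N : ℝ) * (ξ 0 * (1 - a))) = (Finv (ξ 0) - a * Finv (a * ξ 0)) / (1 - a)) ∧
      (∀ z : ℝ, Finv (X₀ - (N : ℝ) * (z * (1 - a))) = (Finv z - a * Finv (a * z)) / (1 - a) →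
        z = ξ 0) ∧
      (∀ n : ℕ, 1 ≤ n → n < N → ξ n = ξ 0 * (1 - a)) ∧
      (ξ N = X₀ - ∑ n ∈ Finset.range N, ξ n) ∧
      (∀ n ≤ N, 0 < ξ n) :=
  afs_version1_optimal_strategy_general f Finv hf hfpos hFinv₁ hFinv₂ τ hτ ρc hρc a ha N hN X₀ hX₀
    hh1
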